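/- For every compact set K ⊂ ℂ, d_X is a metric on X(K): it takes finite nonnegative values, is symmetric, satisfies the triangle inequality d_X(F, H) ≤ d_X(F, G) + d_X(G, H) for all F, G, H ∈ X(K), and d_X(F, G) = 0 implies F = G. -/

import Mathlib

/-!
Reparametrizations compose and (being lifts of degree one circle homeomorphisms) invert, so
`d_Γ` is a pseudometric and `Γ₀` a metric space. Each point of the image of `γ` lies within
`d_Γ(γ, γ')` of the image of `γ'`; hence loops at distance zero have the same image, and
`diam c ≤ diam c' + 2 d_Γ(c, c')`.

Matchings compose: a chain `c ↦ b ↦ c'` costs at most the sum of the two costs, and if `c ↦ b`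
with `b` left unmatched then `diam c / 2 ≤ d_Γ(c, b) + diam b / 2`; this gives the triangle
inequality. If `d_X(F, G) = 0`, every `c ∈ F` is matched, for each `ε`, to a loop of `G` at
distance `< ε` of diameter `> diam c / 2`. Only finitely many loops of `G` are that large, so one
of them is at distance `0`, i.e. equals `c`.
-/

noncomputable section

open Set Filter Metric MeasureTheory
open scoped Classical

/-- A loop: a continuous `1`-periodic map `ℝ → ℂ`, viewed as a continuous map from the
circle `S¹ = ℝ/ℤ` to the complex plane. -/
structure Loop where
  toFun : ℝ → ℂ
  continuous_toFun : Continuous toFun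
  periodic_toFun : Function.Periodic toFun 1

/-- Lifts of orientation-preserving homeomorphisms of the circle `ℝ/ℤ`: continuous strictly
increasing maps of `ℝ` commuting with translation by `1`. -/
def CircleMaps : Set (ℝ → ℝ) :=
  {φ | Continuous φ ∧ StrictMono φ ∧ ∀ t, φ (t + 1) = φ t + 1}

/-- The supremum distance between loops, up to orientation-preserving reparametrization:
`d_Γ(γ, γ') = inf_{φ,ψ} sup_t |γ(φ t) - γ'(ψ t)|`. -/
def dGamma (γ γ' : Loop) : ℝ :=
  sInf {r : ℝ | 0 ≤ r ∧ ∃ φ ∈ CircleMaps, ∃ ψ ∈ CircleMaps,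
    ∀ t : ℝ, dist (γ.toFun (φ t)) (γ'.toFun (ψ t)) ≤ r}

/-- Loops at `d_Γ`-distance zero are identified. -/
def loopRel (γ γ' : Loop) : Prop := dGamma γ γ' = 0

/-- The space `Γ₀` of loop classes: loops modulo the relation `d_Γ = 0`. -/
def LoopClass : Type := Quot loopRel

/-- The class of a loop in `Γ₀`. -/
def Loop.cls (γ : Loop) : LoopClass := Quot.mk loopRel γ

namespace LoopClass

/-- The image of a loop class (all representatives have the same image). -/
def image (c : LoopClass) : Set ℂ := ⋃ γ ∈ {γ : Loop | γ.cls = c}, Set.range γ.toFun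

/-- The diameter of a loop class. -/
def diam (c : LoopClass) : ℝ := Metric.diam c.image

/-- A loop class is trivial if its image is a single point. -/
def IsTrivial (c : LoopClass) : Prop := ∃ z : ℂ, c.image = {z}

/-- A loop class is simple if it has an injective representative. -/
def IsSimple (c : LoopClass) : Prop :=
  ∃ γ : Loop, γ.cls = c ∧ ∀ s t : ℝ, s ∈ Set.Ico (0:ℝ) 1 → t ∈ Set.Ico (0:ℝ) 1 →
    γ.toFun s = γ.toFun t → s = t

/-- The induced distance `d_Γ` on loop classes. -/
def dist (c c' : LoopClass) : ℝ :=
  sInf {r : ℝ | ∃ γ γ' : Loop, γ.cls = c ∧ γ'.cls = c' ∧ dGamma γ γ' ≤ r}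

end LoopClass

/-- The space `X(K)` of at most countable, locally finite collections of nontrivial loop
classes with images contained in `K`. -/
def LoopCollections (K : Set ℂ) : Set (Set LoopClass) :=
  {F | F.Countable ∧ (∀ c ∈ F, ¬ c.IsTrivial ∧ c.image ⊆ K) ∧
    ∀ ε : ℝ, 0 < ε → {c ∈ F | ε < c.diam}.Finite}

/-- A partial matching between the collections `F` and `G`: a set of pairs in which every
element of `F` and every element of `G` occurs at most once. -/
def IsMatching (F G : Set LoopClass) (π : Set (LoopClass × LoopClass)) : Prop :=
  (∀ p ∈ π, p.1 ∈ F ∧ p.2 ∈ G) ∧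
  (∀ p ∈ π, ∀ q ∈ π, p.1 = q.1 → p = q) ∧
  (∀ p ∈ π, ∀ q ∈ π, p.2 = q.2 → p = q)

/-- The elements of `F` and `G` not matched by `π`. -/
def unmatched (F G : Set LoopClass) (π : Set (LoopClass × LoopClass)) : Set LoopClass :=
  {c ∈ F | ∀ p ∈ π, p.1 ≠ c} ∪ {c ∈ G | ∀ p ∈ π, p.2 ≠ c}

/-- The distance `d_X` between loop collections: the infimum over partial matchings of the
maximum of the matched `d_Γ`-distances and of half the diameters of unmatched loops. -/
def dX (F G : Set LoopClass) : ℝ :=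
  sInf {r : ℝ | 0 ≤ r ∧ ∃ π : Set (LoopClass × LoopClass), IsMatching F G π ∧
    (∀ p ∈ π, LoopClass.dist p.1 p.2 ≤ r) ∧
    ∀ c ∈ unmatched F G π, c.diam / 2 ≤ r}

lemma Loop.isCompact_range (γ : Loop) : IsCompact (range γ.toFun) := by
  rw [← γ.periodic_toFun.image_Icc one_pos 0]
  exact isCompact_Icc.image γ.continuous_toFun

namespace CircleMaps

lemma id_mem : id ∈ CircleMaps := ⟨continuous_id, strictMono_id, fun _ => rfl⟩

lemma comp_mem {φ ψ : ℝ → ℝ} (hφ : φ ∈ CircleMaps) (hψ : ψ ∈ CircleMaps) :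
    φ ∘ ψ ∈ CircleMaps :=
  ⟨hφ.1.comp hψ.1, hφ.2.1.comp hψ.2.1, fun t => by
    simp only [Function.comp_apply, hψ.2.2, hφ.2.2]⟩

def toCircleDeg1Lift {φ : ℝ → ℝ} (hφ : φ ∈ CircleMaps) : CircleDeg1Lift :=
  ⟨⟨φ, hφ.2.1.monotone⟩, hφ.2.2⟩

lemma surjective {φ : ℝ → ℝ} (hφ : φ ∈ CircleMaps) : φ.Surjective :=
  (toCircleDeg1Lift hφ).continuous_iff_surjective.1 hφ.1

lemma exists_rightInverse {φ : ℝ → ℝ} (hφ : φ ∈ CircleMaps) :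
    ∃ ψ ∈ CircleMaps, ∀ t, φ (ψ t) = t := by
  obtain ⟨u, hu⟩ := (CircleDeg1Lift.isUnit_iff_bijective (f := toCircleDeg1Lift hφ)).2
    ⟨hφ.2.1.injective, surjective hφ⟩
  refine ⟨(CircleDeg1Lift.toOrderIso u).symm, ⟨OrderIso.continuous _, OrderIso.strictMono _, ?_⟩,
    fun t => ?_⟩
  · intro t
    rw [CircleDeg1Lift.coe_toOrderIso_symm]
    exact CircleDeg1Lift.map_add_one _ t
  · rw [CircleDeg1Lift.coe_toOrderIso_symm]
    have := CircleDeg1Lift.units_apply_inv_apply u t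
    rwa [hu] at this

end CircleMaps

section dGamma

variable {γ γ' γ'' : Loop}

lemma dGamma_nonneg (γ γ' : Loop) : 0 ≤ dGamma γ γ' :=
  Real.sInf_nonneg fun _ hr => hr.1

lemma dGamma_le {r : ℝ} (hr : 0 ≤ r) {φ ψ : ℝ → ℝ} (hφ : φ ∈ CircleMaps) (hψ : ψ ∈ CircleMaps)
    (h : ∀ t, dist (γ.toFun (φ t)) (γ'.toFun (ψ t)) ≤ r) : dGamma γ γ' ≤ r :=
  csInf_le ⟨0, fun _ hs => hs.1⟩ ⟨hr, φ, hφ, ψ, hψ, h⟩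

lemma exists_dist_le_of_dGamma_lt {r : ℝ} (h : dGamma γ γ' < r) :
    ∃ s < r, ∃ φ ∈ CircleMaps, ∃ ψ ∈ CircleMaps,
      ∀ t, dist (γ.toFun (φ t)) (γ'.toFun (ψ t)) ≤ s := by
  have hbdd := (γ.isCompact_range.union γ'.isCompact_range).isBounded
  have hne : {r : ℝ | 0 ≤ r ∧ ∃ φ ∈ CircleMaps, ∃ ψ ∈ CircleMaps,
      ∀ t, dist (γ.toFun (φ t)) (γ'.toFun (ψ t)) ≤ r}.Nonempty :=
    ⟨_, diam_nonneg, id, CircleMaps.id_mem, id, CircleMaps.id_mem, fun t =>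
      dist_le_diam_of_mem hbdd (.inl ⟨t, rfl⟩) (.inr ⟨t, rfl⟩)⟩
  obtain ⟨s, ⟨-, hs⟩, hsr⟩ := exists_lt_of_csInf_lt hne h
  exact ⟨s, hsr, hs⟩

lemma dGamma_comm (γ γ' : Loop) : dGamma γ γ' = dGamma γ' γ := by
  unfold dGamma
  congr 1
  ext r
  refine and_congr_right fun _ => ⟨?_, ?_⟩ <;>
    exact fun ⟨φ, hφ, ψ, hψ, h⟩ => ⟨ψ, hψ, φ, hφ, fun t => (dist_comm _ _).trans_le (h t)⟩

lemma dGamma_self (γ : Loop) : dGamma γ γ = 0 :=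
  (dGamma_le le_rfl CircleMaps.id_mem CircleMaps.id_mem fun _ => (dist_self _).le).antisymm
    (dGamma_nonneg γ γ)

lemma dGamma_triangle (γ γ' γ'' : Loop) : dGamma γ γ'' ≤ dGamma γ γ' + dGamma γ' γ'' := by
  refine le_add_of_forall_lt fun r hr r' hr' => ?_
  obtain ⟨s, hsr, φ, hφ, ψ, hψ, hs⟩ := exists_dist_le_of_dGamma_lt hr
  obtain ⟨s', hsr', φ', hφ', ψ', hψ', hs'⟩ := exists_dist_le_of_dGamma_lt hr'
  obtain ⟨χ, hχ, hψχ⟩ := CircleMaps.exists_rightInverse hψ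
  -- `ψ ∘ χ = id`, so after reparametrizing by `χ ∘ φ'` both pairs pass through `γ' (φ' t)`
  refine dGamma_le (by linarith [dGamma_nonneg γ γ', dGamma_nonneg γ' γ''])
    (CircleMaps.comp_mem hφ (CircleMaps.comp_mem hχ hφ')) hψ' fun t => ?_
  calc dist (γ.toFun (φ (χ (φ' t)))) (γ''.toFun (ψ' t))
      ≤ dist (γ.toFun (φ (χ (φ' t)))) (γ'.toFun (ψ (χ (φ' t))))
        + dist (γ'.toFun (φ' t)) (γ''.toFun (ψ' t)) := by
        rw [hψχ]; exact dist_triangle _ _ _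
    _ ≤ r + r' := by linarith [hs (χ (φ' t)), hs' t]

lemma exists_dist_lt_of_dGamma_lt {r : ℝ} (h : dGamma γ γ' < r) {z : ℂ}
    (hz : z ∈ range γ.toFun) : ∃ w ∈ range γ'.toFun, dist z w < r := by
  obtain ⟨s, hsr, φ, hφ, ψ, -, hs⟩ := exists_dist_le_of_dGamma_lt h
  obtain ⟨a, rfl⟩ := hz
  obtain ⟨t, rfl⟩ := CircleMaps.surjective hφ a
  exact ⟨_, ⟨ψ t, rfl⟩, (hs t).trans_lt hsr⟩

lemma range_subset_of_dGamma_eq_zero (h : dGamma γ γ' = 0) : range γ.toFun ⊆ range γ'.toFun :=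
  fun _ hz => γ'.isCompact_range.isClosed.closure_subset <| mem_closure_iff.2 fun _ hε =>
    exists_dist_lt_of_dGamma_lt (h.trans_lt hε) hz

lemma range_eq_of_dGamma_eq_zero (h : dGamma γ γ' = 0) : range γ.toFun = range γ'.toFun :=
  (range_subset_of_dGamma_eq_zero h).antisymm
    (range_subset_of_dGamma_eq_zero (dGamma_comm γ γ' ▸ h))

lemma diam_range_le_add_dGamma (γ γ' : Loop) :
    diam (range γ.toFun) ≤ diam (range γ'.toFun) + 2 * dGamma γ γ' := by
  refine le_of_forall_gt_imp_ge_of_dense fun a ha => ?_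
  have hr : dGamma γ γ' < (a - diam (range γ'.toFun)) / 2 := by linarith
  have ha : 0 ≤ a := by linarith [dGamma_nonneg γ γ', diam_nonneg (s := range γ'.toFun)]
  refine diam_le_of_forall_dist_le ha fun z hz z' hz' => ?_
  obtain ⟨w, hw, hzw⟩ := exists_dist_lt_of_dGamma_lt hr hz
  obtain ⟨w', hw', hzw'⟩ := exists_dist_lt_of_dGamma_lt hr hz'
  have hww' := dist_le_diam_of_mem γ'.isCompact_range.isBounded hw hw'
  linarith [dist_triangle4 z w w' z', dist_comm z' w']

end dGamma

lemma loopRel_equivalence : Equivalence loopRel where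
  refl := dGamma_self
  symm h := (dGamma_comm _ _).trans h
  trans h h' :=
    ((dGamma_triangle _ _ _).trans (by rw [h, h', add_zero])).antisymm (dGamma_nonneg _ _)

namespace Loop

lemma cls_eq_cls_iff {γ γ' : Loop} : γ.cls = γ'.cls ↔ dGamma γ γ' = 0 :=
  Quot.eq.trans loopRel_equivalence.eqvGen_iff

lemma image_cls (γ : Loop) : γ.cls.image = range γ.toFun :=
  (iUnion₂_subset fun _ h => (range_eq_of_dGamma_eq_zero (cls_eq_cls_iff.1 h)).le).antisymm
    (subset_biUnion_of_mem (u := fun γ' : Loop => range γ'.toFun) (rfl : γ.cls = γ.cls))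

lemma diam_cls (γ : Loop) : γ.cls.diam = diam (range γ.toFun) := by
  rw [LoopClass.diam, image_cls]

lemma dist_cls (γ γ' : Loop) : γ.cls.dist γ'.cls = dGamma γ γ' := by
  have hset : {r : ℝ | ∃ δ δ' : Loop, δ.cls = γ.cls ∧ δ'.cls = γ'.cls ∧ dGamma δ δ' ≤ r} =
      Ici (dGamma γ γ') := by
    ext r
    refine ⟨fun ⟨δ, δ', hδ, hδ', hr⟩ => ?_, fun hr => ⟨γ, γ', rfl, rfl, hr⟩⟩
    have hγδ := cls_eq_cls_iff.1 hδ.symm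
    have hδ'γ' := cls_eq_cls_iff.1 hδ'
    show dGamma γ γ' ≤ r
    linarith [dGamma_triangle γ δ γ', dGamma_triangle δ δ' γ']
  rw [LoopClass.dist, hset, csInf_Ici]

end Loop

lemma LoopClass.exists_cls_eq (c : LoopClass) : ∃ γ : Loop, γ.cls = c := Quot.exists_rep c

instance : MetricSpace LoopClass where
  dist := LoopClass.dist
  dist_self c := by
    obtain ⟨γ, rfl⟩ := c.exists_cls_eq
    exact (γ.dist_cls γ).trans (dGamma_self γ)
  dist_comm c c' := by
    obtain ⟨γ, rfl⟩ := c.exists_cls_eq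
    obtain ⟨γ', rfl⟩ := c'.exists_cls_eq
    exact (γ.dist_cls γ').trans ((dGamma_comm γ γ').trans (γ'.dist_cls γ).symm)
  dist_triangle c c' c'' := by
    obtain ⟨γ, rfl⟩ := c.exists_cls_eq
    obtain ⟨γ', rfl⟩ := c'.exists_cls_eq
    obtain ⟨γ'', rfl⟩ := c''.exists_cls_eq
    simpa only [Loop.dist_cls] using dGamma_triangle γ γ' γ''
  eq_of_dist_eq_zero {c c'} h := by
    obtain ⟨γ, rfl⟩ := c.exists_cls_eq
    obtain ⟨γ', rfl⟩ := c'.exists_cls_eq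
    exact Loop.cls_eq_cls_iff.2 ((γ.dist_cls γ').symm.trans h)

namespace LoopClass

lemma diam_le_diam_add_dist (c c' : LoopClass) : c.diam ≤ c'.diam + 2 * c.dist c' := by
  obtain ⟨γ, rfl⟩ := c.exists_cls_eq
  obtain ⟨γ', rfl⟩ := c'.exists_cls_eq
  rw [γ.diam_cls, γ'.diam_cls, γ.dist_cls]
  exact diam_range_le_add_dGamma γ γ'

lemma diam_pos {c : LoopClass} (hc : ¬ c.IsTrivial) : 0 < c.diam := by
  obtain ⟨γ, rfl⟩ := c.exists_cls_eq
  rw [γ.diam_cls]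
  refine Metric.diam_pos (not_subsingleton_iff.1 fun hsub => ?_) γ.isCompact_range.isBounded
  obtain ⟨z, hz⟩ := exists_eq_singleton_iff_nonempty_subsingleton.2 ⟨range_nonempty _, hsub⟩
  exact hc ⟨z, γ.image_cls.trans hz⟩

end LoopClass

lemma LoopCollections.bddAbove_diam {K : Set ℂ} {F : Set LoopClass}
    (hF : F ∈ LoopCollections K) : BddAbove (LoopClass.diam '' F) := by
  obtain ⟨R, hR⟩ := ((hF.2.2 1 one_pos).image LoopClass.diam).bddAbove
  refine ⟨max 1 R, forall_mem_image.2 fun c hc => ?_⟩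
  by_cases h : 1 < c.diam
  · exact (hR (mem_image_of_mem _ ⟨hc, h⟩)).trans (le_max_right _ _)
  · exact (not_lt.1 h).trans (le_max_left _ _)

section Matching

open SetRel

variable {F G H : Set LoopClass} {π π' : SetRel LoopClass LoopClass} {r r' : ℝ}

lemma unmatched_eq (F G : Set LoopClass) (π : SetRel LoopClass LoopClass) :
    unmatched F G π = F \ π.dom ∪ G \ π.cod := by
  ext c
  simp only [unmatched, mem_union, mem_sep_iff, Set.mem_sdiff, mem_dom, mem_cod]
  aesop

lemma unmatched_inv (F G : Set LoopClass) (π : SetRel LoopClass LoopClass) :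
    unmatched G F π.inv = unmatched F G π := by
  rw [unmatched_eq, unmatched_eq, dom_inv, cod_inv, union_comm]

namespace IsMatching

lemma inv (h : IsMatching F G π) : IsMatching G F π.inv :=
  ⟨fun _ hp => (h.1 _ hp).symm, fun _ hp _ hq e => Prod.swap_injective (h.2.2 _ hp _ hq e),
    fun _ hp _ hq e => Prod.swap_injective (h.2.1 _ hp _ hq e)⟩

lemma comp (h : IsMatching F G π) (h' : IsMatching G H π') : IsMatching F H (π ○ π') := by
  refine ⟨fun _ ⟨_, hb, hb'⟩ => ⟨(h.1 _ hb).1, (h'.1 _ hb').2⟩, ?_, ?_⟩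
  · rintro ⟨a, c⟩ ⟨b, hab, hbc⟩ ⟨a', c'⟩ ⟨b', hab', hbc'⟩ (rfl : a = a')
    obtain rfl : b = b' := congrArg Prod.snd (h.2.1 _ hab _ hab' rfl)
    obtain rfl : c = c' := congrArg Prod.snd (h'.2.1 _ hbc _ hbc' rfl)
    rfl
  · rintro ⟨a, c⟩ ⟨b, hab, hbc⟩ ⟨a', c'⟩ ⟨b', hab', hbc'⟩ (rfl : c = c')
    obtain rfl : b = b' := congrArg Prod.fst (h'.2.2 _ hbc _ hbc' rfl)
    obtain rfl : a = a' := congrArg Prod.fst (h.2.2 _ hab _ hab' rfl)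
    rfl

end IsMatching

def IsMatchingWithin (F G : Set LoopClass) (r : ℝ) (π : SetRel LoopClass LoopClass) : Prop :=
  IsMatching F G π ∧ (∀ p ∈ π, LoopClass.dist p.1 p.2 ≤ r) ∧
    ∀ c ∈ unmatched F G π, c.diam / 2 ≤ r

namespace IsMatchingWithin

lemma mono (h : IsMatchingWithin F G r π) (hrr' : r ≤ r') : IsMatchingWithin F G r' π :=
  ⟨h.1, fun p hp => (h.2.1 p hp).trans hrr', fun c hc => (h.2.2 c hc).trans hrr'⟩

lemma inv (h : IsMatchingWithin F G r π) : IsMatchingWithin G F r π.inv :=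
  ⟨h.1.inv, fun p hp => (dist_comm p.1 p.2).trans_le (h.2.1 _ hp),
    unmatched_inv F G π ▸ h.2.2⟩

lemma half_diam_le_of_mem_diff_dom_comp (h : IsMatchingWithin F G r π)
    (h' : IsMatchingWithin G H r' π') (hr' : 0 ≤ r') {c : LoopClass}
    (hc : c ∈ F \ (π ○ π').dom) : c.diam / 2 ≤ r + r' := by
  by_cases hcπ : c ∈ π.dom
  · obtain ⟨b, hcb⟩ := hcπ
    have hb : b ∈ unmatched G H π' := by
      rw [unmatched_eq]
      exact .inl ⟨(h.1.1 _ hcb).2, fun ⟨d, hbd⟩ => hc.2 ⟨d, b, hcb, hbd⟩⟩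
    linarith [h'.2.2 b hb, h.2.1 _ hcb, c.diam_le_diam_add_dist b]
  · have hc' : c ∈ unmatched F G π := by
      rw [unmatched_eq]
      exact .inl ⟨hc.1, hcπ⟩
    linarith [h.2.2 c hc']

lemma comp (h : IsMatchingWithin F G r π) (h' : IsMatchingWithin G H r' π') (hr : 0 ≤ r)
    (hr' : 0 ≤ r') : IsMatchingWithin F H (r + r') (π ○ π') := by
  refine ⟨h.1.comp h'.1, fun _ ⟨b, hab, hbc⟩ => ?_, fun c hc => ?_⟩
  · exact (dist_triangle _ b _).trans (add_le_add (h.2.1 _ hab) (h'.2.1 _ hbc))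
  rw [unmatched_eq] at hc
  rcases hc with hc | hc
  · exact h.half_diam_le_of_mem_diff_dom_comp h' hr' hc
  · rw [← dom_inv, inv_comp] at hc
    exact add_comm r' r ▸ h'.inv.half_diam_le_of_mem_diff_dom_comp h.inv hr hc

end IsMatchingWithin

lemma dX_eq_sInf (F G : Set LoopClass) :
    dX F G = sInf {r | 0 ≤ r ∧ ∃ π, IsMatchingWithin F G r π} := rfl

lemma dX_nonneg (F G : Set LoopClass) : 0 ≤ dX F G :=
  Real.sInf_nonneg fun _ hr => hr.1

lemma dX_le (hr : 0 ≤ r) (h : IsMatchingWithin F G r π) : dX F G ≤ r :=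
  csInf_le ⟨0, fun _ hs => hs.1⟩ ⟨hr, π, h⟩

lemma dX_comm (F G : Set LoopClass) : dX F G = dX G F := by
  simp only [dX_eq_sInf]
  congr 1
  ext r
  exact and_congr_right fun _ => ⟨fun ⟨π, h⟩ => ⟨π.inv, h.inv⟩, fun ⟨π, h⟩ => ⟨π.inv, h.inv⟩⟩

variable {K : Set ℂ}

lemma exists_isMatchingWithin_of_dX_lt (hF : F ∈ LoopCollections K) (hG : G ∈ LoopCollections K)
    (h : dX F G < r) : ∃ π, IsMatchingWithin F G r π := by
  obtain ⟨R, hR⟩ := ((LoopCollections.bddAbove_diam hF).union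
    (LoopCollections.bddAbove_diam hG)).mono (Set.image_union _ _ _).le
  have hne : {r | 0 ≤ r ∧ ∃ π, IsMatchingWithin F G r π}.Nonempty := by
    refine ⟨max 0 (R / 2), le_max_left _ _, ∅, ⟨by simp, by simp, by simp⟩, by simp,
      fun c hc => ?_⟩
    rw [unmatched_eq, dom_empty, cod_empty, sdiff_empty, sdiff_empty] at hc
    linarith [hR (mem_image_of_mem _ hc), le_max_right 0 (R / 2)]
  obtain ⟨s, ⟨-, π, hπ⟩, hsr⟩ := exists_lt_of_csInf_lt hne h
  exact ⟨π, hπ.mono hsr.le⟩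

lemma dX_triangle (hF : F ∈ LoopCollections K) (hG : G ∈ LoopCollections K)
    (hH : H ∈ LoopCollections K) : dX F H ≤ dX F G + dX G H := by
  refine le_add_of_forall_lt fun r hr r' hr' => ?_
  have hr0 := (dX_nonneg F G).trans hr.le
  have hr'0 := (dX_nonneg G H).trans hr'.le
  obtain ⟨π, hπ⟩ := exists_isMatchingWithin_of_dX_lt hF hG hr
  obtain ⟨π', hπ'⟩ := exists_isMatchingWithin_of_dX_lt hG hH hr'
  exact dX_le (add_nonneg hr0 hr'0) (hπ.comp hπ' hr0 hr'0)

lemma subset_of_dX_eq_zero (hF : F ∈ LoopCollections K) (hG : G ∈ LoopCollections K)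
    (h : dX F G = 0) : F ⊆ G := by
  intro c hc
  have hδ := LoopClass.diam_pos (hF.2.1 c hc).1
  have hT := hG.2.2 (c.diam / 2) (half_pos hδ)
  suffices c ∈ closure {g ∈ G | c.diam / 2 < g.diam} from (hT.isClosed.closure_subset this).1
  refine Metric.mem_closure_iff.2 fun ε hε => ?_
  obtain ⟨π, hπ⟩ := exists_isMatchingWithin_of_dX_lt hF hG
    (r := min (ε / 2) (c.diam / 8)) (h ▸ by positivity)
  have hr := min_le_left (ε / 2) (c.diam / 8)
  have hr' := min_le_right (ε / 2) (c.diam / 8)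
  obtain ⟨p, hp, rfl⟩ : ∃ p ∈ π, p.1 = c := by
    by_contra! hcπ
    linarith [hπ.2.2 c (.inl ⟨hc, hcπ⟩)]
  have hdist := hπ.2.1 p hp
  refine ⟨p.2, ⟨(hπ.1.1 p hp).2, ?_⟩, hdist.trans_lt (by linarith)⟩
  linarith [p.1.diam_le_diam_add_dist p.2]

end Matching

theorem dX_is_metric_general (K : Set ℂ) :
    (∀ F ∈ LoopCollections K, ∀ G ∈ LoopCollections K, 0 ≤ dX F G) ∧
    (∀ F ∈ LoopCollections K, ∀ G ∈ LoopCollections K, dX F G = dX G F) ∧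
    (∀ F ∈ LoopCollections K, ∀ G ∈ LoopCollections K, ∀ H ∈ LoopCollections K,
      dX F H ≤ dX F G + dX G H) ∧
    (∀ F ∈ LoopCollections K, ∀ G ∈ LoopCollections K, dX F G = 0 → F = G) :=
  ⟨fun F _ G _ => dX_nonneg F G, fun F _ G _ => dX_comm F G,
    fun _ hF _ hG _ hH => dX_triangle hF hG hH, fun F hF G hG h =>
    (subset_of_dX_eq_zero hF hG h).antisymm (subset_of_dX_eq_zero hG hF (dX_comm F G ▸ h))⟩

/-- For every compact `K ⊂ ℂ`, `d_X` is a metric on `X(K)`. -/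
theorem dX_is_metric (K : Set ℂ) (hK : IsCompact K) :
    (∀ F ∈ LoopCollections K, ∀ G ∈ LoopCollections K, 0 ≤ dX F G) ∧
    (∀ F ∈ LoopCollections K, ∀ G ∈ LoopCollections K, dX F G = dX G F) ∧
    (∀ F ∈ LoopCollections K, ∀ G ∈ LoopCollections K, ∀ H ∈ LoopCollections K,
      dX F H ≤ dX F G + dX G H) ∧
    (∀ F ∈ LoopCollections K, ∀ G ∈ LoopCollections K, dX F G = 0 → F = G) :=
  dX_is_metric_general K
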